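/- arXiv:2310.17616 — 4 statements merged into one kernel-verified Lean document; each statement's English description precedes it below -/
import Mathlib

section
/- The loop-nocontinue refinement holds in big-step semantics: if c1 and c2 both contain no continue command, then for(;;c2) c1 refines for(;;skip) (c1;;c2). -/
/- Big-step based shallow embedding for the While-CF language (extended
   with heap load/store, which are the source of runtime errors).
   A state consists of a variable valuation and a heap; assertions are
   shallowly embedded as state predicates.  `BigStep c σ1 ek σ2` is the
   big-step judgment (c,σ1) ⇓ (ek,σ2) and `Error c σ` is (c,σ) ⇑. -/

abbrev Vars := String → Int
abbrev Heap := Int → Option Int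

structure PState where
  vars : Vars
  heap : Heap

abbrev Expr := Vars → Int
abbrev Assertion := PState → Prop

inductive Com : Type where
  | skip : Com
  | brk : Com
  | cont : Com
  | assign : String → Expr → Com
  /-- `load x e` is `x = [e]`. -/
  | load : String → Expr → Com
  /-- `store e1 e2` is `[e1] = e2`. -/
  | store : Expr → Expr → Com
  | seq : Com → Com → Com
  | ifc : Expr → Com → Com → Com
  /-- `forloop c1 c2` is the C-style loop `for(;; c2) c1` with body `c1`
      and increment step `c2`. -/
  | forloop : Com → Com → Com

/-- Exit kinds: normal exit ε, break exit, continue exit. -/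
inductive ExitKind : Type where
  | normal : ExitKind
  | brk : ExitKind
  | cont : ExitKind

def updV (s : Vars) (x : String) (v : Int) : Vars :=
  fun y => if y = x then v else s y

def updH (h : Heap) (l : Int) (v : Int) : Heap :=
  fun a => if a = l then some v else h a

/-- Big-step semantics `(c, σ1) ⇓ (ek, σ2)`. -/
inductive BigStep : Com → PState → ExitKind → PState → Prop where
  | skip (σ : PState) : BigStep .skip σ .normal σ
  | brk (σ : PState) : BigStep .brk σ .brk σ
  | cont (σ : PState) : BigStep .cont σ .cont σ
  | assign (x : String) (e : Expr) (σ : PState) :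
      BigStep (.assign x e) σ .normal ⟨updV σ.vars x (e σ.vars), σ.heap⟩
  | load (x : String) (e : Expr) (σ : PState) (v : Int) :
      σ.heap (e σ.vars) = some v →
      BigStep (.load x e) σ .normal ⟨updV σ.vars x v, σ.heap⟩
  | store (e1 e2 : Expr) (σ : PState) (v : Int) :
      σ.heap (e1 σ.vars) = some v →
      BigStep (.store e1 e2) σ .normal
        ⟨σ.vars, updH σ.heap (e1 σ.vars) (e2 σ.vars)⟩
  | seq1 (c1 c2 : Com) (σ1 σ3 : PState) (ek : ExitKind) (σ2 : PState) :
      BigStep c1 σ1 .normal σ3 → BigStep c2 σ3 ek σ2 →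
      BigStep (.seq c1 c2) σ1 ek σ2
  | seq2 (c1 c2 : Com) (σ1 : PState) (ek : ExitKind) (σ2 : PState) :
      ek ≠ .normal → BigStep c1 σ1 ek σ2 →
      BigStep (.seq c1 c2) σ1 ek σ2
  | if_true (e : Expr) (c1 c2 : Com) (σ1 : PState) (ek : ExitKind) (σ2 : PState) :
      e σ1.vars ≠ 0 → BigStep c1 σ1 ek σ2 →
      BigStep (.ifc e c1 c2) σ1 ek σ2
  | if_false (e : Expr) (c1 c2 : Com) (σ1 : PState) (ek : ExitKind) (σ2 : PState) :
      e σ1.vars = 0 → BigStep c2 σ1 ek σ2 →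
      BigStep (.ifc e c1 c2) σ1 ek σ2
  | for_break (c1 c2 : Com) (σ1 σ2 : PState) :
      BigStep c1 σ1 .brk σ2 →
      BigStep (.forloop c1 c2) σ1 .normal σ2
  | for_loop (c1 c2 : Com) (σ1 : PState) (ek : ExitKind) (σ3 σ4 σ2 : PState) :
      ek ≠ .brk → BigStep c1 σ1 ek σ3 →
      BigStep c2 σ3 .normal σ4 →
      BigStep (.forloop c1 c2) σ4 .normal σ2 →
      BigStep (.forloop c1 c2) σ1 .normal σ2

/-- Error judgment `(c, σ) ⇑`. -/
inductive Error : Com → PState → Prop where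
  | load (x : String) (e : Expr) (σ : PState) :
      σ.heap (e σ.vars) = none → Error (.load x e) σ
  | store (e1 e2 : Expr) (σ : PState) :
      σ.heap (e1 σ.vars) = none → Error (.store e1 e2) σ
  | seq1 (c1 c2 : Com) (σ : PState) :
      Error c1 σ → Error (.seq c1 c2) σ
  | seq2 (c1 c2 : Com) (σ1 σ2 : PState) :
      BigStep c1 σ1 .normal σ2 → Error c2 σ2 → Error (.seq c1 c2) σ1
  | if_true (e : Expr) (c1 c2 : Com) (σ : PState) :
      e σ.vars ≠ 0 → Error c1 σ → Error (.ifc e c1 c2) σ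
  | if_false (e : Expr) (c1 c2 : Com) (σ : PState) :
      e σ.vars = 0 → Error c2 σ → Error (.ifc e c1 c2) σ
  | for_body (c1 c2 : Com) (σ : PState) :
      Error c1 σ → Error (.forloop c1 c2) σ
  | for_incr (c1 c2 : Com) (σ1 : PState) (ek : ExitKind) (σ2 : PState) :
      ek ≠ .brk → BigStep c1 σ1 ek σ2 → Error c2 σ2 →
      Error (.forloop c1 c2) σ1
  | for_loop (c1 c2 : Com) (σ1 : PState) (ek : ExitKind) (σ3 σ4 : PState) :
      ek ≠ .brk → BigStep c1 σ1 ek σ3 → BigStep c2 σ3 .normal σ4 →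
      Error (.forloop c1 c2) σ4 → Error (.forloop c1 c2) σ1

/-- The postcondition corresponding to an exit kind. -/
def postOf (Q Rb Rc : Assertion) : ExitKind → Assertion
  | .normal => Q
  | .brk => Rb
  | .cont => Rc

/-- Big-step validity ⊨b {P} c {Q, [Rb, Rc]}: from every state satisfying
    `P`, the execution of `c` is error-free and every terminating
    execution ends in a state satisfying the postcondition corresponding
    to its exit kind. -/
def ValidB (P : Assertion) (c : Com) (Q Rb Rc : Assertion) : Prop :=
  ∀ σ1, P σ1 →
    ¬ Error c σ1 ∧
    ∀ ek σ2, BigStep c σ1 ek σ2 → postOf Q Rb Rc ek σ2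

/-- `Refines c c'` (c ⊑ c'): every big-step behavior (termination with
    exit kind and final state, or error) of `c` is a behavior of `c'`. -/
def Refines (c c' : Com) : Prop :=
  (∀ σ1 ek σ2, BigStep c σ1 ek σ2 → BigStep c' σ1 ek σ2) ∧
  (∀ σ, Error c σ → Error c' σ)

/-- `noContinue c`: `c` contains no continue statement (including inside
    loop bodies). -/
def noContinue : Com → Prop
  | .cont => False
  | .seq c1 c2 => noContinue c1 ∧ noContinue c2
  | .ifc _ c1 c2 => noContinue c1 ∧ noContinue c2
  | .forloop c1 c2 => noContinue c1 ∧ noContinue c2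
  | _ => True

theorem noContinue_no_cont {c σ ek σ'} (h : BigStep c σ ek σ') :
    noContinue c → ek ≠ .cont := by
  induction h with
  | cont => intro hc; exact absurd hc (by simp [noContinue])
  | seq1 _ _ _ _ _ _ _ _ ih1 ih2 => intro hc; exact ih2 hc.2
  | seq2 _ _ _ _ _ _ _ ih => intro hc; exact ih hc.1
  | if_true _ _ _ _ _ _ _ _ ih => intro hc; exact ih hc.1
  | if_false _ _ _ _ _ _ _ _ ih => intro hc; exact ih hc.2
  | _ => intro _; simp

theorem loop_nc_step {c σ ek σ'} (h : BigStep c σ ek σ') :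
    ∀ c1 c2, c = .forloop c1 c2 → noContinue c1 → noContinue c2 →
      BigStep (.forloop (.seq c1 c2) .skip) σ ek σ' := by
  induction h with
  | for_break c1' c2' σ1 σ2 hb =>
    rintro c1 c2 ⟨rfl, rfl⟩ h1 h2
    exact .for_break _ _ _ _ (.seq2 _ _ _ _ _ (by simp) hb)
  | for_loop c1' c2' σ1 ek σ3 σ4 σ2 hne hb hi hl ih1 ih2 ih3 =>
    rintro c1 c2 ⟨rfl, rfl⟩ h1 h2
    have hek : ek = .normal := by
      cases ek with
      | normal => rfl
      | brk => exact absurd rfl hne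
      | cont => exact absurd rfl (noContinue_no_cont hb h1)
    subst hek
    exact .for_loop _ _ _ .normal σ4 σ4 _ (by simp)
      (.seq1 _ _ _ _ _ _ hb hi) (.skip _) (ih3 _ _ rfl h1 h2)
  | _ => rintro c1 c2 ⟨⟩

theorem loop_nc_err {c σ} (h : Error c σ) :
    ∀ c1 c2, c = .forloop c1 c2 → noContinue c1 → noContinue c2 →
      Error (.forloop (.seq c1 c2) .skip) σ := by
  induction h with
  | for_body c1' c2' σ he =>
    rintro c1 c2 ⟨rfl, rfl⟩ h1 h2
    exact .for_body _ _ _ (.seq1 _ _ _ he)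
  | for_incr c1' c2' σ1 ek σ2 hne hb he =>
    rintro c1 c2 ⟨rfl, rfl⟩ h1 h2
    have hek : ek = .normal := by
      cases ek with
      | normal => rfl
      | brk => exact absurd rfl hne
      | cont => exact absurd rfl (noContinue_no_cont hb h1)
    subst hek
    exact .for_body _ _ _ (.seq2 _ _ _ _ hb he)
  | for_loop c1' c2' σ1 ek σ3 σ4 hne hb hi he ih =>
    rintro c1 c2 ⟨rfl, rfl⟩ h1 h2
    have hek : ek = .normal := by
      cases ek with
      | normal => rfl
      | brk => exact absurd rfl hne
      | cont => exact absurd rfl (noContinue_no_cont hb h1)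
    subst hek
    exact .for_loop _ _ _ .normal σ4 σ4 (by simp)
      (.seq1 _ _ _ _ _ _ hb hi) (.skip _) (ih _ _ rfl h1 h2)
  | _ => rintro c1 c2 ⟨⟩

/-- the loop-nocontinue refinement holds in big-step
    semantics: if c1 and c2 contain no continue, then for(;;c2) c1
    refines for(;;skip) (c1;;c2). -/
theorem loop_nocontinue_refines (c1 c2 : Com)
    (h1 : noContinue c1) (h2 : noContinue c2) :
    Refines (.forloop c1 c2) (.forloop (.seq c1 c2) .skip) := by
  exact ⟨fun σ1 ek σ2 hb => loop_nc_step hb c1 c2 rfl h1 h2,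
    fun σ he => loop_nc_err he c1 c2 rfl h1 h2⟩
end

section
/- Under the big-step shallow embedding, the sequence inversion rule is valid: if ⊨b {P} c1;;c2 {Q,[R⃗]}, then there exists an assertion Q' such that ⊨b {P} c1 {Q',[R⃗]} and ⊨b {Q'} c2 {Q,[R⃗]}. The witness Q' can be taken as the weakest precondition of c2 for Q: σ ⊨ Q' iff not (c2,σ)⇑ and for all σ1, (c2,σ)⇓(ε,σ1) implies σ1 ⊨ Q, and all control-flow exits of c2 from σ land in the corresponding R⃗. -/
/-- sequence inversion is valid under the big-step shallow
    embedding: if ⊨b {P} c1;;c2 {Q,[Rb,Rc]}, then there exists an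
    assertion Q' with ⊨b {P} c1 {Q',[Rb,Rc]} and ⊨b {Q'} c2 {Q,[Rb,Rc]}
    (the witness can be taken to be the weakest precondition of c2). -/
theorem seq_inv_big (P Q Rb Rc : Assertion) (c1 c2 : Com)
    (h : ValidB P (.seq c1 c2) Q Rb Rc) :
    ∃ Q' : Assertion, ValidB P c1 Q' Rb Rc ∧ ValidB Q' c2 Q Rb Rc := by
  refine ⟨fun σ => ¬ Error c2 σ ∧ ∀ ek σ2, BigStep c2 σ ek σ2 → postOf Q Rb Rc ek σ2, ?_, ?_⟩
  · intro σ1 hP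
    obtain ⟨hne, hbs⟩ := h σ1 hP
    constructor
    · intro he; exact hne (Error.seq1 _ _ _ he)
    · intro ek σ2 hb
      cases ek with
      | normal =>
        refine ⟨fun he => hne (Error.seq2 _ _ _ _ hb he), ?_⟩
        intro ek' σ3 hb2
        exact hbs ek' σ3 (BigStep.seq1 _ _ _ _ _ _ hb hb2)
      | brk => exact hbs .brk σ2 (BigStep.seq2 _ _ _ _ _ (by simp) hb)
      | cont => exact hbs .cont σ2 (BigStep.seq2 _ _ _ _ _ (by simp) hb)
  · intro σ1 hQ'; exact hQ'
end

section
/- Under the big-step shallow embedding, the nocontinue rule is valid: if command c contains no continue statement and ⊨b {P} c {Q,[Rb,Rc]}, then for any assertion Rc' we have ⊨b {P} c {Q,[Rb,Rc']}. The key lemma is that if c contains no continue, then no big-step execution of c terminates with exit kind con. -/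
lemma noContinue_no_cont_s9 {c σ1 ek σ2} (hb : BigStep c σ1 ek σ2)
    (hnc : noContinue c) : ek ≠ ExitKind.cont := by
  induction hb with
  | skip => simp
  | brk => simp
  | cont => exact absurd hnc id
  | assign => simp
  | load => simp
  | store => simp
  | seq1 _ _ _ _ _ _ _ _ ih1 ih2 => exact ih2 hnc.2
  | seq2 _ _ _ _ _ _ _ ih => exact ih hnc.1
  | if_true _ _ _ _ _ _ _ _ ih => exact ih hnc.1
  | if_false _ _ _ _ _ _ _ _ ih => exact ih hnc.2
  | for_break => simp
  | for_loop => simp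

/-- the nocontinue rule is valid under the big-step shallow
    embedding: if c contains no continue statement and
    ⊨b {P} c {Q,[Rb,Rc]}, then ⊨b {P} c {Q,[Rb,Rc']} for any Rc'. -/
theorem nocontinue_big (P Q Rb Rc : Assertion) (c : Com)
    (hnc : noContinue c) (h : ValidB P c Q Rb Rc) :
    ∀ Rc' : Assertion, ValidB P c Q Rb Rc' := by
  intro Rc' σ1 hP
  obtain ⟨he, hpost⟩ := h σ1 hP
  refine ⟨he, fun ek σ2 hb => ?_⟩
  have := hpost ek σ2 hb
  cases ek with
  | normal => exact this
  | brk => exact this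
  | cont => exact absurd rfl (noContinue_no_cont_s9 hb hnc)
end

section
/- The frame rule is valid under the big-step shallow embedding of separation logic, assuming the big-step frame property: if ⊨b {P} c {Q,[Rb,Rc]} and c does not modify program variables free in F, then ⊨b {P*F} c {Q*F,[Rb*F,Rc*F]}. -/
/-- Heap-disjointness. -/
def hdisj (h1 h2 : Heap) : Prop := ∀ l, h1 l = none ∨ h2 l = none

/-- Union of heaps (left-biased; used under disjointness). -/
def hunion (h1 h2 : Heap) : Heap := fun l => (h1 l).orElse (fun _ => h2 l)

/-- `HJoin σ1 h σ` means σ = σ1 ⊕ h: the state σ is the state σ1 extended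
    with the disjoint heap piece h (same variable valuation). -/
def HJoin (σ1 : PState) (h : Heap) (σ : PState) : Prop :=
  σ1.vars = σ.vars ∧ hdisj σ1.heap h ∧ σ.heap = hunion σ1.heap h

/-- Separating conjunction: `star P F σ` iff σ splits as σ1 ⊕ h with
    σ1 ⊨ P and the framed part (current variables together with the heap
    piece h) satisfying F. -/
def star (P F : Assertion) : Assertion :=
  fun σ => ∃ σ1 h, HJoin σ1 h σ ∧ P σ1 ∧ F ⟨σ.vars, h⟩

/-- the frame rule is valid under the big-step shallow
    embedding of separation logic, assuming the big-step frame property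
    (hypotheses `hframe_err` and `hframe_step`); the side condition that
    `c` does not modify the program variables free in `F` is rendered
    semantically as `hmod`: executions of `c` preserve the truth of `F`
    on any fixed heap piece. -/
theorem frame_big
    (hframe_err : ∀ (c : Com) (σ1 : PState) (h : Heap) (σ : PState),
      HJoin σ1 h σ → Error c σ → Error c σ1)
    (hframe_step : ∀ (c : Com) (σ1 : PState) (h : Heap) (σ : PState)
      (ek : ExitKind) (σ2' : PState),
      HJoin σ1 h σ → BigStep c σ ek σ2' →
      Error c σ1 ∨ ∃ σ2, HJoin σ2 h σ2' ∧ BigStep c σ1 ek σ2)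
    (c : Com) (P Q Rb Rc F : Assertion)
    (hmod : ∀ (σ1 : PState) (ek : ExitKind) (σ2 : PState),
      BigStep c σ1 ek σ2 → ∀ hp : Heap, F ⟨σ1.vars, hp⟩ → F ⟨σ2.vars, hp⟩)
    (h : ValidB P c Q Rb Rc) :
    ValidB (star P F) c (star Q F) (star Rb F) (star Rc F) := by
  intro σ hσ
  obtain ⟨σ1, hp, hjoin, hPσ1, hFh⟩ := hσ
  obtain ⟨hne, hpost⟩ := h σ1 hPσ1
  constructor
  · intro herr
    exact hne (hframe_err c σ1 hp σ hjoin herr)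
  · intro ek σ2' hstep
    rcases hframe_step c σ1 hp σ ek σ2' hjoin hstep with herr | ⟨σ2, hjoin2, hstep2⟩
    · exact absurd herr hne
    · have hF2 : F ⟨σ2'.vars, hp⟩ := hmod σ ek σ2' hstep hp hFh
      have hq := hpost ek σ2 hstep2
      cases ek <;> exact ⟨σ2, hp, hjoin2, hq, hF2⟩
end
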